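/- arXiv:1207.1323 — 2 statements merged into one kernel-verified Lean document; each statement's English description precedes it below -/
import Mathlib

section
/- Let A be a torsion-free abelian group and H a finite group acting on A by automorphisms such that every nontrivial h ∈ H fixes only the zero element of A. Then for every nonzero b ∈ A and every positive integer s, the constant sequence (b, b, …, b) of length s is H-independent. -/
/-!
If `∑ⱼ h_j • b = m • b` for `m` elements `h_j ∈ H`, then every `h_j` fixes `b`. Indeed, the orbit
of `b` spans a finitely generated torsion-free, hence free, `ℤ`-module, and averaging a dot product
over `H` gives an `H`-invariant positive definite form on it. All `h_j • b` then have the length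
of `b` while their mean is `b`, which forces `∑ⱼ B(h_j • b - b, h_j • b - b) = 0`. Applied to a
nontrivial `h_j` fixing `b ≠ 0`, this contradicts the freeness of the action.
-/

/-- A finite sequence `(a 0, …, a (s-1))` of elements of `A` is `H`-dependent with respect
to the action `σ : H →* AddAut A` if there exist distinct indices `i 0, …, i (m-1)` (with
`m ≥ 1`) and (not necessarily distinct) nontrivial elements `h 0, …, h (m-1)` of `H` such
that `a (i 0) + ⋯ + a (i (m-1)) = (a (i 0))^(h 0) + ⋯ + (a (i (m-1)))^(h (m-1))`.
Otherwise the sequence is `H`-independent. -/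
def IsHDependent {A H : Type*} [AddCommGroup A] [Group H] (σ : H →* Multiplicative (AddAut A))
    {s : ℕ} (a : Fin s → A) : Prop :=
  ∃ (m : ℕ) (i : Fin m → Fin s) (h : Fin m → H),
    0 < m ∧ Function.Injective i ∧ (∀ j, h j ≠ 1) ∧
      ∑ j, a (i j) = ∑ j, Multiplicative.toAdd (σ (h j)) (a (i j))

open Finset
open LinearMap (BilinForm)

namespace LinearMap.BilinForm

variable {R M ι : Type*} [CommRing R] [LinearOrder R] [IsStrictOrderedRing R]
  [AddCommGroup M] [Module R M]

theorem eq_of_sum_eq_card_smul (B : BilinForm R M) (hB : ∀ x, x ≠ 0 → 0 < B x x)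
    {s : Finset ι} {u : ι → M} {b : M} (hnorm : ∀ j ∈ s, B (u j) (u j) = B b b)
    (hsum : ∑ j ∈ s, u j = #s • b) : ∀ j ∈ s, u j = b := by
  have hnonneg : ∀ x, 0 ≤ B x x := fun x => by
    rcases eq_or_ne x 0 with rfl | hx
    · simp
    · exact (hB x hx).le
  have hzero : ∑ j ∈ s, B (u j - b) (u j - b) = 0 := by
    have hleft : ∑ j ∈ s, B (u j) b = #s • B b b := by
      rw [← LinearMap.sum_apply, ← map_sum, hsum, map_nsmul, LinearMap.smul_apply]
    have hright : ∑ j ∈ s, B b (u j) = #s • B b b := by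
      rw [← map_sum, hsum, map_nsmul]
    simp only [map_sub, LinearMap.sub_apply, sum_sub_distrib, sum_congr rfl hnorm, hleft,
      hright, sum_const]
    abel
  intro j hj
  by_contra hne
  have := (sum_eq_zero_iff_of_nonneg fun j _ => hnonneg (u j - b)).1 hzero j hj
  exact (hB _ (sub_ne_zero.2 hne)).ne' this

end LinearMap.BilinForm

namespace Representation

section Average

variable {R G M : Type*} [CommRing R] [Group G] [Fintype G] [AddCommGroup M] [Module R M]
  (ρ : Representation R G M) (B : BilinForm R M)

def averageBilinForm : BilinForm R M := ∑ g, B.compl₁₂ (ρ g) (ρ g)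

@[simp]
theorem averageBilinForm_apply (x y : M) :
    ρ.averageBilinForm B x y = ∑ g, B (ρ g x) (ρ g y) := by
  simp [averageBilinForm, LinearMap.sum_apply]

theorem averageBilinForm_apply_apply (g : G) (x y : M) :
    ρ.averageBilinForm B (ρ g x) (ρ g y) = ρ.averageBilinForm B x y := by
  simp only [averageBilinForm_apply, ← Module.End.mul_apply, ← map_mul]
  exact Fintype.sum_equiv (Equiv.mulRight g) _ _ fun _ => rfl

theorem averageBilinForm_self_pos [LinearOrder R] [IsStrictOrderedRing R]
    (hB : ∀ x, x ≠ 0 → 0 < B x x) {x : M} (hx : x ≠ 0) : 0 < ρ.averageBilinForm B x x := by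
  rw [averageBilinForm_apply]
  refine sum_pos (fun g _ => hB _ fun h => hx ?_) univ_nonempty
  simpa using congrArg (ρ g⁻¹) h

end Average

variable {R G M : Type*} [CommRing R] [LinearOrder R] [IsStrictOrderedRing R] [Group G]
  [AddCommGroup M] [Module R M] (ρ : Representation R G M)

theorem exists_invariant_bilinForm [Finite G] [Module.Free R M] [Module.Finite R M] :
    ∃ B : BilinForm R M, (∀ x, x ≠ 0 → 0 < B x x) ∧ ∀ g x y, B (ρ g x) (ρ g y) = B x y := by
  have := Fintype.ofFinite G
  let c := (Module.Free.chooseBasis R M).equivFun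
  let B₀ : BilinForm R M := (dotProductBilin R R).compl₁₂ c.toLinearMap c.toLinearMap
  have hB₀ : ∀ x, x ≠ 0 → 0 < B₀ x x := fun x hx => by
    have hcx : c x ≠ 0 := by simpa using hx
    exact lt_of_le_of_ne' (Fintype.sum_nonneg fun i => mul_self_nonneg (c x i))
      (mt dotProduct_self_eq_zero.1 hcx)
  exact ⟨ρ.averageBilinForm B₀, fun x => ρ.averageBilinForm_self_pos B₀ hB₀,
    ρ.averageBilinForm_apply_apply B₀⟩

theorem apply_eq_of_sum_eq_card_smul [Finite G] [Module.Free R M] [Module.Finite R M]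
    {ι : Type*} {s : Finset ι} {h : ι → G} {b : M} (hsum : ∑ j ∈ s, ρ (h j) b = #s • b) :
    ∀ j ∈ s, ρ (h j) b = b := by
  obtain ⟨B, hB, hinv⟩ := ρ.exists_invariant_bilinForm
  exact B.eq_of_sum_eq_card_smul hB (fun j _ => hinv (h j) b b) hsum

def orbitSpan (b : M) : Subrepresentation ρ where
  toSubmodule := Submodule.span R (Set.range fun g => ρ g b)
  apply_mem_toSubmodule g := by
    refine fun v hv => (Submodule.span_le (p := (Submodule.span R _).comap (ρ g))).2 ?_ hv
    rintro _ ⟨g', rfl⟩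
    exact Submodule.subset_span ⟨g * g', by simp⟩

theorem apply_eq_of_sum_eq_card_smul_of_isTorsionFree [IsPrincipalIdealRing R] [Finite G]
    [Module.IsTorsionFree R M] {ι : Type*} {s : Finset ι} {h : ι → G} {b : M}
    (hsum : ∑ j ∈ s, ρ (h j) b = #s • b) : ∀ j ∈ s, ρ (h j) b = b := by
  let N := ρ.orbitSpan b
  have : Module.Finite R N.toSubmodule := Module.Finite.span_of_finite R (Set.finite_range _)
  let b' : N.toSubmodule := ⟨b, Submodule.subset_span ⟨1, by simp⟩⟩
  have hsum' : ∑ j ∈ s, N.toRepresentation (h j) b' = #s • b' :=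
    Subtype.ext (by push_cast; exact hsum)
  intro j hj
  exact congrArg Subtype.val (N.toRepresentation.apply_eq_of_sum_eq_card_smul hsum' j hj)

def ofAddAut {A H : Type*} [AddCommGroup A] [Group H] (σ : H →* Multiplicative (AddAut A)) :
    Representation ℤ H A where
  toFun g := (Multiplicative.toAdd (σ g)).toAddMonoidHom.toIntLinearMap
  map_one' := by ext; simp
  map_mul' g g' := by ext; simp

@[simp]
theorem ofAddAut_apply {A H : Type*} [AddCommGroup A] [Group H]
    (σ : H →* Multiplicative (AddAut A)) (g : H) (a : A) :
    ofAddAut σ g a = Multiplicative.toAdd (σ g) a :=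
  rfl

end Representation

theorem constant_sequence_independent_of_torsion_free_general
    (A : Type*) [AddCommGroup A]
    (htf : ∀ (n : ℕ) (a : A), n ≠ 0 → n • a = 0 → a = 0)
    (H : Type*) [Group H] [Finite H] (σ : H →* Multiplicative (AddAut A))
    (hfree : ∀ h : H, h ≠ 1 → ∀ a : A, Multiplicative.toAdd (σ h) a = a → a = 0)
    (b : A) (hb : b ≠ 0) (s : ℕ) :
    ¬ IsHDependent σ (fun _ : Fin s => b) := by
  rintro ⟨m, i, h, hm, -, hne, hsum⟩
  have : IsAddTorsionFree A :=
    ⟨fun n hn => (injective_iff_map_eq_zero (nsmulAddMonoidHom (α := A) n)).2 (htf n · hn)⟩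
  have hfix : ∀ j ∈ univ, Representation.ofAddAut σ (h j) b = b :=
    (Representation.ofAddAut σ).apply_eq_of_sum_eq_card_smul_of_isTorsionFree
      (by simpa using hsum.symm)
  exact hb (hfree _ (hne ⟨0, hm⟩) b (by simpa using hfix ⟨0, hm⟩ (mem_univ _)))

/-- **Corollary 2.3.** Let `A` be a torsion-free abelian group and `H` a finite group acting
on `A` by automorphisms with `C_A(h) = 0` for all nontrivial `h ∈ H`. Then for every
nonzero `b ∈ A` and every positive integer `s`, the constant sequence `(b, …, b)` of
length `s` is `H`-independent. -/
theorem constant_sequence_independent_of_torsion_free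
    (A : Type*) [AddCommGroup A]
    (htf : ∀ (n : ℕ) (a : A), n ≠ 0 → n • a = 0 → a = 0)
    (H : Type*) [Group H] [Finite H] (σ : H →* Multiplicative (AddAut A))
    (hfree : ∀ h : H, h ≠ 1 → ∀ a : A, Multiplicative.toAdd (σ h) a = a → a = 0)
    (b : A) (hb : b ≠ 0) (s : ℕ) (hs : 0 < s) :
    ¬ IsHDependent σ (fun _ : Fin s => b) :=
  constant_sequence_independent_of_torsion_free_general A htf H σ hfree b hb s
end

section
/- Let A be an abelian group and L an A-graded Lie algebra admitting a finite group H of double automorphisms such that for every nontrivial h ∈ H the automorphism of A induced by h fixes only the zero element of A, and such that C_L(H) is nilpotent of class at most c. Then L satisfies the c-th selective nilpotency condition: [L_{a_1}, L_{a_2}, …, L_{a_{c+1}}] = 0 (left-normed) for every H-independent sequence (a_1, a_2, …, a_{c+1}) of nonzero elements of A. -/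
/-!
Averaging each `x j ∈ L_{a j}` over `H` gives elements of `C_L(H)`, whose left-normed bracket
therefore vanishes. Expanding that bracket multilinearly gives a sum, over all `f : Fin (c+1) → H`,
of the brackets `[ρ (f 0) (x 0), …, ρ (f c) (x c)]`, homogeneous of degree `∑ j, a j ^ f j`.
`H`-independence of `a` says that only `f = 1` has degree `∑ j, a j`, so the component of the sum
in that degree is `[x 0, …, x c]`, which must vanish as the grading is a direct sum.
-/

/-- Left-normed iterated Lie bracket of a list of elements:
`listBracket [x₁, x₂, …, xₙ] = [x₁, x₂, …, xₙ]` (left-normed); the empty list gives `0`.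
A Lie algebra is nilpotent of class at most `c` iff `listBracket xs = 0` for every
list `xs` of length `c + 1`. -/
def listBracket {L : Type*} [LieRing L] : List L → L
  | [] => 0
  | x :: ys => ys.foldl (fun a b => ⁅a, b⁆) x

section LeftNormedBracket

variable {L : Type*} [LieRing L]

theorem listBracket_append_singleton {l : List L} (hl : l ≠ []) (y : L) :
    listBracket (l ++ [y]) = ⁅listBracket l, y⁆ := by
  cases l with
  | nil => exact absurd rfl hl
  | cons x ys => simp [listBracket, List.foldl_append]

theorem listBracket_ofFn_succ {n : ℕ} (x : Fin (n + 2) → L) :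
    listBracket (List.ofFn x) = ⁅listBracket (List.ofFn (Fin.init x)), x (Fin.last _)⁆ := by
  rw [List.ofFn_succ', List.concat_eq_append, listBracket_append_singleton (by simp)]
  rfl

variable (R : Type*) [CommRing R] [LieAlgebra R L]

def leftNormedBracket : (n : ℕ) → MultilinearMap R (fun _ : Fin (n + 1) => L) L
  | 0 => MultilinearMap.ofSubsingleton R L L (0 : Fin 1) LinearMap.id
  | n + 1 => ((LieModule.toEnd R L L : L →ₗ[R] Module.End R L).compMultilinearMap
      (leftNormedBracket n)).uncurryRight

theorem leftNormedBracket_apply {n : ℕ} (x : Fin (n + 1) → L) :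
    leftNormedBracket R n x = listBracket (List.ofFn x) := by
  induction n with
  | zero => simp [leftNormedBracket, listBracket]
  | succ n ih =>
    rw [listBracket_ofFn_succ, ← ih]
    rfl

theorem listBracket_ofFn_sum {ι : Type*} [Fintype ι] {n : ℕ} (y : Fin (n + 1) → ι → L) :
    listBracket (List.ofFn fun j => ∑ i, y j i)
      = ∑ f : Fin (n + 1) → ι, listBracket (List.ofFn fun j => y j (f j)) := by
  simp only [← leftNormedBracket_apply ℤ]
  exact (leftNormedBracket ℤ n).map_sum y

end LeftNormedBracket

theorem listBracket_ofFn_mem {L R A : Type*} [LieRing L] [Semiring R] [Module R L]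
    [AddCommMonoid A] {Lc : A → Submodule R L}
    (hgr : ∀ a b : A, ∀ x ∈ Lc a, ∀ y ∈ Lc b, ⁅x, y⁆ ∈ Lc (a + b)) {n : ℕ}
    {x : Fin (n + 1) → L} {a : Fin (n + 1) → A} (hx : ∀ j, x j ∈ Lc (a j)) :
    listBracket (List.ofFn x) ∈ Lc (∑ j, a j) := by
  induction n with
  | zero => simpa [listBracket] using hx 0
  | succ n ih =>
    rw [listBracket_ofFn_succ, Fin.sum_univ_castSucc]
    exact hgr _ _ _ (ih fun j => hx j.castSucc) _ (hx _)

theorem apply_sum_apply_self {R M H : Type*} [Semiring R] [AddCommMonoid M] [Module R M]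
    [Group H] [Fintype H] (ρ : H →* (M ≃ₗ[R] M)) (g : H) (v : M) :
    ρ g (∑ h, ρ h v) = ∑ h, ρ h v := by
  rw [map_sum]
  exact Fintype.sum_equiv (Equiv.mulLeft g) _ _ fun h => by simp [map_mul]

theorem iSupIndep.eq_zero_of_sum_eq_zero {R M A ι : Type*} [Ring R] [AddCommGroup M]
    [Module R M] {p : A → Submodule R M} (hind : iSupIndep p) {s : Finset ι} {z : ι → M}
    {deg : ι → A} (hz : ∀ i ∈ s, z i ∈ p (deg i)) {i₀ : ι} (hi₀ : i₀ ∈ s)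
    (hdeg : ∀ i ∈ s, i ≠ i₀ → deg i ≠ deg i₀) (hsum : ∑ i ∈ s, z i = 0) : z i₀ = 0 := by
  classical
  have hrest : ∑ i ∈ s.erase i₀, z i ∈ ⨆ (b : A) (_ : b ≠ deg i₀), p b :=
    Submodule.sum_mem _ fun i hi =>
      le_iSup₂ (f := fun b (_ : b ≠ deg i₀) => p b) _
        (hdeg i (Finset.mem_of_mem_erase hi) (Finset.ne_of_mem_erase hi))
        (hz i (Finset.mem_of_mem_erase hi))
  rw [← Finset.add_sum_erase s z hi₀, add_eq_zero_iff_eq_neg] at hsum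
  exact Submodule.disjoint_def.mp (hind (deg i₀)) _ (hz i₀ hi₀) (hsum ▸ Submodule.neg_mem _ hrest)

theorem isHDependent_of_sum_eq {A H : Type*} [AddCommGroup A] [Group H]
    {σ : H →* Multiplicative (AddAut A)} {s : ℕ} {a : Fin s → A} {f : Fin s → H} (hf : f ≠ 1)
    (hsum : ∑ j, Multiplicative.toAdd (σ (f j)) (a j) = ∑ j, a j) : IsHDependent σ a := by
  classical
  set t := Finset.univ.filter fun j => f j ≠ 1 with ht_def
  have ht : t.Nonempty := by
    obtain ⟨j, hj⟩ := Function.ne_iff.mp hf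
    exact ⟨j, Finset.mem_filter.mpr ⟨Finset.mem_univ j, hj⟩⟩
  have hsum_t : ∑ j ∈ t, a j = ∑ j ∈ t, Multiplicative.toAdd (σ (f j)) (a j) := by
    -- off `t` the summands of the two sides agree, since `σ 1` is the identity
    have hdiff : ∑ j ∈ t, (Multiplicative.toAdd (σ (f j)) (a j) - a j) = 0 := by
      rw [ht_def, Finset.sum_filter_of_ne (p := fun j => f j ≠ 1) fun j _ hj h1 => hj (by simp [h1]),
        Finset.sum_sub_distrib, hsum, sub_self]
    rwa [Finset.sum_sub_distrib, sub_eq_zero, eq_comm] at hdiff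
  let e : Fin t.card ≃ t := t.equivFin.symm
  refine ⟨t.card, fun k => e k, fun k => f (e k), ht.card_pos,
    fun k₁ k₂ hk => e.injective (Subtype.ext hk), fun k => (Finset.mem_filter.mp (e k).2).2, ?_⟩
  simpa only [← Finset.sum_coe_sort t, e.sum_comp (fun j : t => a j),
    e.sum_comp (fun j : t => Multiplicative.toAdd (σ (f j)) (a j))] using hsum_t

theorem selective_nilpotency_of_double_automorphisms_general
    (R : Type*) [CommRing R] (L : Type*) [LieRing L] [LieAlgebra R L]
    (A : Type*) [AddCommGroup A] [DecidableEq A]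
    (Lc : A → Submodule R L)
    (hint : DirectSum.IsInternal Lc)
    (hgr : ∀ a b : A, ∀ x ∈ Lc a, ∀ y ∈ Lc b, ⁅x, y⁆ ∈ Lc (a + b))
    (H : Type*) [Group H] [Finite H]
    (ρ : H →* (L ≃ₗ[R] L)) (σ : H →* Multiplicative (AddAut A))
    (hcomp : ∀ (h : H) (a : A), ⇑(ρ h) '' (Lc a : Set L) = (Lc (Multiplicative.toAdd (σ h) a) : Set L))
    (c : ℕ)
    (hCL : ∀ xs : List L, xs.length = c + 1 → (∀ y ∈ xs, ∀ h : H, ρ h y = y) →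
      listBracket xs = 0) :
    ∀ a : Fin (c + 1) → A, (∀ j, a j ≠ 0) → ¬ IsHDependent σ a →
      ∀ x : Fin (c + 1) → L, (∀ j, x j ∈ Lc (a j)) →
        listBracket (List.ofFn x) = 0 := by
  have := Fintype.ofFinite H
  intro a _ hindep x hx
  set T : (Fin (c + 1) → H) → L := fun f => listBracket (List.ofFn fun j => ρ (f j) (x j))
  have hsum : ∑ f, T f = 0 := by
    refine (listBracket_ofFn_sum fun j h => ρ h (x j)).symm.trans <|
      hCL _ (List.length_ofFn ..) fun y hy g => ?_
    obtain ⟨j, rfl⟩ := List.mem_ofFn.mp hy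
    exact apply_sum_apply_self ρ g (x j)
  have hdeg : ∀ f, T f ∈ Lc (∑ j, Multiplicative.toAdd (σ (f j)) (a j)) := fun f =>
    listBracket_ofFn_mem hgr fun j => (hcomp (f j) (a j)).subset (Set.mem_image_of_mem _ (hx j))
  have hT1 : T 1 = listBracket (List.ofFn x) := by simp [T]
  rw [← hT1]
  refine hint.submodule_iSupIndep.eq_zero_of_sum_eq_zero (fun f _ => hdeg f)
    (Finset.mem_univ 1) (fun f _ hf hf_deg => hindep (isHDependent_of_sum_eq hf ?_)) hsum
  simpa using hf_deg

/-- **Selective nilpotency (proved inside Theorem 1.2).** Let `A` be an abelian group and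
`L` an `A`-graded Lie algebra admitting a finite group `H` of double automorphisms with
`C_A(h) = 0` for all nontrivial `h ∈ H` and `C_L(H)` nilpotent of class at most `c`. Then
`[L_{a 0}, …, L_{a c}] = 0` (left-normed) for every `H`-independent sequence
`(a 0, …, a c)` of nonzero elements of `A`. -/
theorem selective_nilpotency_of_double_automorphisms
    (R : Type*) [CommRing R] (L : Type*) [LieRing L] [LieAlgebra R L]
    (A : Type*) [AddCommGroup A] [DecidableEq A]
    (Lc : A → Submodule R L)
    (hint : DirectSum.IsInternal Lc)
    (hgr : ∀ a b : A, ∀ x ∈ Lc a, ∀ y ∈ Lc b, ⁅x, y⁆ ∈ Lc (a + b))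
    (H : Type*) [Group H] [Finite H]
    (ρ : H →* (L ≃ₗ[R] L)) (σ : H →* Multiplicative (AddAut A))
    (hbr : ∀ (h : H) (x y : L), ρ h ⁅x, y⁆ = ⁅ρ h x, ρ h y⁆)
    (hcomp : ∀ (h : H) (a : A), ⇑(ρ h) '' (Lc a : Set L) = (Lc (Multiplicative.toAdd (σ h) a) : Set L))
    (hfree : ∀ h : H, h ≠ 1 → ∀ a : A, Multiplicative.toAdd (σ h) a = a → a = 0)
    (c : ℕ)
    (hCL : ∀ xs : List L, xs.length = c + 1 → (∀ y ∈ xs, ∀ h : H, ρ h y = y) →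
      listBracket xs = 0) :
    ∀ a : Fin (c + 1) → A, (∀ j, a j ≠ 0) → ¬ IsHDependent σ a →
      ∀ x : Fin (c + 1) → L, (∀ j, x j ∈ Lc (a j)) →
        listBracket (List.ofFn x) = 0 :=
  selective_nilpotency_of_double_automorphisms_general R L A Lc hint hgr H ρ σ hcomp c hCL
end
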